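/- Let N ≥ 3 and let u : [0,∞) → ℝ be a C² solution of u'' + ((N-1)/r)·u' + f(u) = 0 for r > 0 with u(0) = α > 0, u'(0) = 0, and suppose u(r) > 0 for all r ≥ 0. Assume f is continuous, positive and increasing on (0,∞), with F(u) := ∫_u^∞ ds/f(s) < ∞ for u > 0. Then F(u(r)) ≥ r²/(2N) for all r ≥ 0. -/

import Mathlib

/-!
Writing the equation as `(r ^ (N-1) u')' = -r ^ (N-1) f(u)` and integrating from `0` shows that
`u' ≤ 0`, so `u` decreases and `f(u)` increases along `[0, r]`; comparing with `f(u(r))` gives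
`u'(r) ≤ -r f(u(r)) / N`. Hence `(F ∘ u)' = -u' / f(u) ≥ r / N`, and integrating from `F(u(0)) ≥ 0`
gives `F(u(r)) ≥ r² / (2N)`.
-/

open MeasureTheory Set Topology

theorem hasDerivAt_integral_Ioi {g : ℝ → ℝ} {a t : ℝ} (hg : IntegrableOn g (Ioi a))
    (hat : a < t) (hmeas : StronglyMeasurableAtFilter g (𝓝 t)) (hcont : ContinuousAt g t) :
    HasDerivAt (fun x => ∫ s in Ioi x, g s) (-g t) t := by
  have hint : IntervalIntegrable g volume a t :=
    (intervalIntegrable_iff_integrableOn_Ioc_of_le hat.le).2 (hg.mono_set Ioc_subset_Ioi_self)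
  have htail : HasDerivAt (fun x => (∫ s in Ioi a, g s) - ∫ s in a..x, g s) (-g t) t := by
    simpa using (intervalIntegral.integral_hasDerivAt_right hint hmeas hcont).const_sub _
  refine htail.congr_of_eventuallyEq ?_
  filter_upwards [Ioi_mem_nhds hat] with x hx
  rw [← intervalIntegral.integral_Ioi_sub_Ioi hg hx.le, sub_sub_cancel]

-- For radially symmetric solutions in `ℝᴺ`, `k = N - 1`.
structure IsRadialSolution (k : ℕ) (f u u' u'' : ℝ → ℝ) : Prop where
  hasDerivAt : ∀ r, HasDerivAt u (u' r) r
  hasDerivAt_deriv : ∀ r, HasDerivAt u' (u'' r) r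
  ode : ∀ r > (0 : ℝ), u'' r + k / r * u' r + f (u r) = 0
  deriv_zero : u' 0 = 0

namespace IsRadialSolution

variable {k : ℕ} {f u u' u'' : ℝ → ℝ}

theorem continuous (hsol : IsRadialSolution k f u u' u'') : Continuous u :=
  continuous_iff_continuousAt.2 fun r => (hsol.hasDerivAt r).continuousAt

theorem continuous_deriv (hsol : IsRadialSolution k f u u' u'') : Continuous u' :=
  continuous_iff_continuousAt.2 fun r => (hsol.hasDerivAt_deriv r).continuousAt

theorem hasDerivAt_flux (hsol : IsRadialSolution k f u u' u'') {r : ℝ} (hr : 0 < r) :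
    HasDerivAt (fun s => s ^ k * u' s) (-(r ^ k * f (u r))) r := by
  refine ((hasDerivAt_pow k r).mul (hsol.hasDerivAt_deriv r)).congr_deriv ?_
  have hode := hsol.ode r hr
  rcases k with _ | k
  · simp only [CharP.cast_eq_zero, zero_div, zero_mul, add_zero] at hode
    simp only [CharP.cast_eq_zero, pow_zero, zero_mul, one_mul, zero_add]
    linarith
  · have hpow : ((k + 1 : ℕ) : ℝ) / r * r ^ (k + 1) = (k + 1 : ℕ) * r ^ k := by
      field_simp; ring
    simp only [Nat.add_sub_cancel]
    linear_combination r ^ (k + 1) * hode - u' r * hpow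

theorem continuousOn_comp (hsol : IsRadialSolution k f u u' u'') (hfc : ContinuousOn f (Ioi 0))
    (hupos : ∀ r ≥ (0 : ℝ), 0 < u r) : ContinuousOn (fun s => f (u s)) (Ici 0) :=
  hfc.comp hsol.continuous.continuousOn fun s hs => hupos s hs

theorem flux_eq_neg_integral (hsol : IsRadialSolution k f u u' u'')
    (hfc : ContinuousOn f (Ioi 0)) (hupos : ∀ r ≥ (0 : ℝ), 0 < u r) {r : ℝ} (hr : 0 ≤ r) :
    r ^ k * u' r = -∫ s in (0 : ℝ)..r, s ^ k * f (u s) := by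
  have hcont : ContinuousOn (fun s => s ^ k * f (u s)) (Icc 0 r) :=
    ((continuous_pow k).continuousOn.mul (hsol.continuousOn_comp hfc hupos)).mono
      Icc_subset_Ici_self
  have hftc := intervalIntegral.integral_eq_sub_of_hasDerivAt_of_le hr
    ((continuous_pow k).mul hsol.continuous_deriv).continuousOn
    (fun s hs => hsol.hasDerivAt_flux hs.1) (hcont.neg.intervalIntegrable_of_Icc hr)
  simp only [intervalIntegral.integral_neg, Pi.mul_apply, hsol.deriv_zero, mul_zero,
    sub_zero] at hftc
  linarith

theorem deriv_nonpos (hsol : IsRadialSolution k f u u' u'') (hfc : ContinuousOn f (Ioi 0))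
    (hfpos : ∀ t > (0 : ℝ), 0 < f t) (hupos : ∀ r ≥ (0 : ℝ), 0 < u r) {r : ℝ} (hr : 0 < r) :
    u' r ≤ 0 := by
  have hint : 0 ≤ ∫ s in (0 : ℝ)..r, s ^ k * f (u s) :=
    intervalIntegral.integral_nonneg hr.le fun s hs =>
      mul_nonneg (pow_nonneg hs.1 k) (hfpos _ (hupos s hs.1)).le
  have hflux := hsol.flux_eq_neg_integral hfc hupos hr.le
  exact nonpos_of_mul_nonpos_right (by linarith) (pow_pos hr k)

theorem antitoneOn (hsol : IsRadialSolution k f u u' u'') (hfc : ContinuousOn f (Ioi 0))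
    (hfpos : ∀ t > (0 : ℝ), 0 < f t) (hupos : ∀ r ≥ (0 : ℝ), 0 < u r) :
    AntitoneOn u (Ici 0) := by
  refine antitoneOn_of_hasDerivWithinAt_nonpos (convex_Ici 0) hsol.continuous.continuousOn
    (fun r _ => (hsol.hasDerivAt r).hasDerivWithinAt) fun r hr => ?_
  rw [interior_Ici] at hr
  exact hsol.deriv_nonpos hfc hfpos hupos hr

theorem deriv_le (hsol : IsRadialSolution k f u u' u'') (hfc : ContinuousOn f (Ioi 0))
    (hfpos : ∀ t > (0 : ℝ), 0 < f t) (hfmono : MonotoneOn f (Ioi 0))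
    (hupos : ∀ r ≥ (0 : ℝ), 0 < u r) {r : ℝ} (hr : 0 < r) :
    u' r ≤ -(r * f (u r)) / (k + 1) := by
  have hmono : ∫ s in (0 : ℝ)..r, s ^ k * f (u r) ≤ ∫ s in (0 : ℝ)..r, s ^ k * f (u s) := by
    refine intervalIntegral.integral_mono_on hr.le
      (((continuous_pow k).mul continuous_const).intervalIntegrable _ _)
      ((((continuous_pow k).continuousOn.mul (hsol.continuousOn_comp hfc hupos)).mono
        Icc_subset_Ici_self).intervalIntegrable_of_Icc hr.le) fun s hs => ?_
    have hus : u r ≤ u s := hsol.antitoneOn hfc hfpos hupos hs.1 hr.le hs.2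
    exact mul_le_mul_of_nonneg_left (hfmono (hupos r hr.le) (hupos s hs.1) hus)
      (pow_nonneg hs.1 k)
  rw [intervalIntegral.integral_mul_const, integral_pow] at hmono
  have hflux := hsol.flux_eq_neg_integral hfc hupos hr.le
  refine le_of_mul_le_mul_left ?_ (pow_pos hr k)
  calc r ^ k * u' r ≤ -((r ^ (k + 1) - 0 ^ (k + 1)) / (k + 1) * f (u r)) := by linarith
    _ = r ^ k * (-(r * f (u r)) / (k + 1)) := by
      rw [zero_pow k.succ_ne_zero]; ring

theorem sq_div_le_integral_Ioi (hsol : IsRadialSolution k f u u' u'')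
    (hfc : ContinuousOn f (Ioi 0)) (hfpos : ∀ t > (0 : ℝ), 0 < f t)
    (hfmono : MonotoneOn f (Ioi 0))
    (hint : ∀ t > (0 : ℝ), IntegrableOn (fun s => 1 / f s) (Ioi t))
    (hupos : ∀ r ≥ (0 : ℝ), 0 < u r) {r : ℝ} (hr : 0 ≤ r) :
    r ^ 2 / (2 * (k + 1)) ≤ ∫ s in Ioi (u r), 1 / f s := by
  have hcont : ContinuousOn (fun s => 1 / f s) (Ioi 0) :=
    continuousOn_const.div hfc fun t ht => (hfpos t ht).ne'
  have hF : ∀ t > (0 : ℝ), HasDerivAt (fun x => ∫ s in Ioi x, 1 / f s) (-(1 / f t)) t :=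
    fun t ht => hasDerivAt_integral_Ioi (hint (t / 2) (half_pos ht)) (half_lt_self ht)
      (hcont.stronglyMeasurableAtFilter isOpen_Ioi t ht) (hcont.continuousAt (Ioi_mem_nhds ht))
  have hH : ∀ r ≥ (0 : ℝ),
      HasDerivAt (fun r => (∫ s in Ioi (u r), 1 / f s) - r ^ 2 / (2 * (k + 1)))
        (-(1 / f (u r)) * u' r - r / (k + 1)) r := by
    intro r hr
    refine ((hF _ (hupos r hr)).comp r (hsol.hasDerivAt r)).sub ?_
    refine ((hasDerivAt_pow 2 r).div_const (2 * ((k : ℝ) + 1))).congr_deriv ?_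
    field_simp
    simp
  have hmono := monotoneOn_of_hasDerivWithinAt_nonneg (convex_Ici 0)
    (fun r hr => (hH r hr).continuousAt.continuousWithinAt)
    (fun r hr => (hH r (interior_subset hr)).hasDerivWithinAt) fun r hr => by
      rw [interior_Ici] at hr
      have hfu := hfpos _ (hupos r hr.le)
      have hle := hsol.deriv_le hfc hfpos hfmono hupos hr
      have hdiv : -(r * f (u r)) / (k + 1) = -(r / (k + 1) * f (u r)) := by ring
      rw [sub_nonneg, neg_mul, one_div_mul_eq_div, ← neg_div, le_div_iff₀ hfu]
      linarith
  have hH0 : 0 ≤ ∫ s in Ioi (u 0), 1 / f s :=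
    setIntegral_nonneg measurableSet_Ioi fun s hs =>
      one_div_nonneg.2 (hfpos s ((hupos 0 le_rfl).trans hs)).le
  have := hmono self_mem_Ici hr hr
  simp only [ne_eq, OfNat.ofNat_ne_zero, not_false_eq_true, zero_pow, zero_div, sub_zero] at this
  linarith

end IsRadialSolution

theorem stmt_7_general (N : ℕ) (hN : 3 ≤ N) (f : ℝ → ℝ)
    (hfc : ContinuousOn f (Set.Ioi 0))
    (hfpos : ∀ t > (0 : ℝ), 0 < f t)
    (hfmono : MonotoneOn f (Set.Ioi 0))
    (hint : ∀ t > (0 : ℝ), MeasureTheory.IntegrableOn (fun s => 1 / f s) (Set.Ioi t))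
    (u u' u'' : ℝ → ℝ)
    (hu : ∀ r, HasDerivAt u (u' r) r)
    (hu' : ∀ r, HasDerivAt u' (u'' r) r)
    (hode : ∀ r > (0 : ℝ), u'' r + ((N : ℝ) - 1) / r * u' r + f (u r) = 0)
    (hu'0 : u' 0 = 0)
    (hupos : ∀ r ≥ (0 : ℝ), 0 < u r) :
    ∀ r ≥ (0 : ℝ), (∫ s in Set.Ioi (u r), 1 / f s) ≥ r ^ 2 / (2 * N) := by
  intro r hr
  obtain ⟨k, rfl⟩ : ∃ k, N = k + 1 := ⟨N - 1, by omega⟩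
  have hsol : IsRadialSolution k f u u' u'' :=
    ⟨hu, hu', fun r hr => by simpa using hode r hr, hu'0⟩
  push_cast
  exact hsol.sq_div_le_integral_Ioi hfc hfpos hfmono hint hupos hr

theorem stmt_7 (N : ℕ) (hN : 3 ≤ N) (f : ℝ → ℝ)
    (hfc : ContinuousOn f (Set.Ioi 0))
    (hfpos : ∀ t > (0 : ℝ), 0 < f t)
    (hfmono : MonotoneOn f (Set.Ioi 0))
    (hint : ∀ t > (0 : ℝ), MeasureTheory.IntegrableOn (fun s => 1 / f s) (Set.Ioi t))
    (u u' u'' : ℝ → ℝ) (α : ℝ) (hα : 0 < α)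
    (hu : ∀ r, HasDerivAt u (u' r) r)
    (hu' : ∀ r, HasDerivAt u' (u'' r) r)
    (hode : ∀ r > (0 : ℝ), u'' r + ((N : ℝ) - 1) / r * u' r + f (u r) = 0)
    (hu0 : u 0 = α) (hu'0 : u' 0 = 0)
    (hupos : ∀ r ≥ (0 : ℝ), 0 < u r) :
    ∀ r ≥ (0 : ℝ), (∫ s in Set.Ioi (u r), 1 / f s) ≥ r ^ 2 / (2 * N) :=
  stmt_7_general N hN f hfc hfpos hfmono hint u u' u'' hu hu' hode hu'0 hupos
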